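/- If E is a real inner product space, S ⊆ E, z ∈ S, and x₁, x₂ are two points of E both having z as a nearest point in S, then every point on the segment from x₁ to x₂ also has z as a nearest point in S; i.e., for t ∈ [0,1], ‖(t•x₁ + (1-t)•x₂) - z‖ ≤ ‖(t•x₁ + (1-t)•x₂) - y‖ for all y ∈ S. -/

import Mathlib

/-! The condition `‖x - z‖ ≤ ‖x - y‖` becomes linear in `x` after squaring both sides, since the
`‖x‖ ^ 2` terms cancel; it thus cuts out a half-space, and the points having `z` as a nearest point
in `S` form an intersection of half-spaces, hence a convex set. -/

section

variable {E : Type*} [NormedAddCommGroup E] [InnerProductSpace ℝ E]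

theorem norm_sub_le_norm_sub_iff_inner (x y z : E) :
    ‖x - z‖ ≤ ‖x - y‖ ↔ 2 * inner ℝ x (y - z) ≤ ‖y‖ ^ 2 - ‖z‖ ^ 2 := by
  rw [← pow_le_pow_iff_left₀ (norm_nonneg _) (norm_nonneg _) two_ne_zero,
    norm_sub_sq_real, norm_sub_sq_real, inner_sub_right]
  constructor <;> intro h <;> linarith

theorem convex_setOf_norm_sub_le_norm_sub (y z : E) :
    Convex ℝ {x : E | ‖x - z‖ ≤ ‖x - y‖} := by
  simp only [norm_sub_le_norm_sub_iff_inner]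
  exact convex_halfSpace_le ((2 : ℝ) • (innerₛₗ ℝ).flip (y - z)).isLinear _

theorem convex_setOf_forall_norm_sub_le (S : Set E) (z : E) :
    Convex ℝ {x : E | ∀ y ∈ S, ‖x - z‖ ≤ ‖x - y‖} := by
  simpa only [Set.ofPred_forall] using
    convex_iInter₂ fun y (_ : y ∈ S) => convex_setOf_norm_sub_le_norm_sub y z

end

theorem stmt1_general {E : Type*} [NormedAddCommGroup E] [InnerProductSpace ℝ E]
    (S : Set E) (z : E) (x₁ x₂ : E)
    (h₁ : ∀ y ∈ S, ‖x₁ - z‖ ≤ ‖x₁ - y‖)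
    (h₂ : ∀ y ∈ S, ‖x₂ - z‖ ≤ ‖x₂ - y‖)
    (t : ℝ) (ht : t ∈ Set.Icc (0 : ℝ) 1) :
    ∀ y ∈ S, ‖(t • x₁ + (1 - t) • x₂) - z‖ ≤ ‖(t • x₁ + (1 - t) • x₂) - y‖ :=
  convex_setOf_forall_norm_sub_le S z h₁ h₂ ht.1 (sub_nonneg.2 ht.2) (add_sub_cancel t 1)

theorem stmt1 {E : Type*} [NormedAddCommGroup E] [InnerProductSpace ℝ E]
    (S : Set E) (z : E) (hz : z ∈ S) (x₁ x₂ : E)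
    (h₁ : ∀ y ∈ S, ‖x₁ - z‖ ≤ ‖x₁ - y‖)
    (h₂ : ∀ y ∈ S, ‖x₂ - z‖ ≤ ‖x₂ - y‖)
    (t : ℝ) (ht : t ∈ Set.Icc (0 : ℝ) 1) :
    ∀ y ∈ S, ‖(t • x₁ + (1 - t) • x₂) - z‖ ≤ ‖(t • x₁ + (1 - t) • x₂) - y‖ :=
  stmt1_general S z x₁ x₂ h₁ h₂ t ht
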